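/- arXiv:2603.13207 — 2 statements merged into one kernel-verified Lean document; each statement's English description precedes it below -/
import Mathlib

section
/- For all real z > 0, one has z·ψ'(z) > 1, equivalently z ψ'(z) - 1 = ∫_0^∞ (e^t - 1 - t)/((e^t - 1)(1 - e^{-t})) · e^{-tz} dt > 0. -/
open MeasureTheory Real

/-- The trigamma function: second derivative of `log ∘ Γ`. -/
noncomputable def trigamma (z : ℝ) : ℝ :=
  iteratedDeriv 2 (fun x => Real.log (Real.Gamma x)) z

/-!
Differentiating the Bohr–Mollerup approximations `logGammaSeq` twice, with locally uniform
convergence of the derivatives, gives `ψ'(z) = ∑ 1 / (z + m) ^ 2`. Expanding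
`1 / (z + m) ^ 2 = ∫ t e^{-(z + m) t} dt` and summing the geometric series turns this into
`ψ'(z) = ∫ k(t) e^{-z t} dt` with `k(t) = t / (1 - e^{-t})`. Since `k(0⁺) = 1`, integrating by
parts gives `z ψ'(z) - 1 = ∫ k'(t) e^{-z t} dt`, and `k' > 0` on `(0, ∞)`.
-/

open Filter Topology Set

noncomputable section

lemma summable_inv_add_nat_sq {a : ℝ} (ha : 0 < a) :
    Summable fun m : ℕ => ((a + m) ^ 2)⁻¹ := by
  refine ((summable_one_div_nat_add_rpow a 2).mpr one_lt_two).congr fun m => ?_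
  rw [abs_of_pos (by positivity), rpow_two, one_div, add_comm]

lemma Real.BohrMollerup.hasDerivAt_logGammaSeq (n : ℕ) {x : ℝ} (hx : 0 < x) :
    HasDerivAt (logGammaSeq · n) (log n - ∑ m ∈ Finset.range (n + 1), (x + m)⁻¹) x := by
  have hlog : HasDerivAt (fun y => ∑ m ∈ Finset.range (n + 1), log (y + m))
      (∑ m ∈ Finset.range (n + 1), (x + m)⁻¹) x :=
    HasDerivAt.fun_sum fun m _ => by
      simpa [one_div] using ((hasDerivAt_id x).add_const (m : ℝ)).log (by positivity)
  simpa [logGammaSeq] using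
    (((hasDerivAt_id x).mul_const (log n)).add_const (log n.factorial)).fun_sub hlog

lemma hasDerivAt_log_sub_sum_inv_add (n : ℕ) {x : ℝ} (hx : 0 < x) :
    HasDerivAt (fun y : ℝ => log n - ∑ m ∈ Finset.range (n + 1), (y + m)⁻¹)
      (∑ m ∈ Finset.range (n + 1), ((x + m) ^ 2)⁻¹) x := by
  have hsum : HasDerivAt (fun y : ℝ => ∑ m ∈ Finset.range (n + 1), (y + m)⁻¹)
      (∑ m ∈ Finset.range (n + 1), -((x + m) ^ 2)⁻¹) x :=
    HasDerivAt.fun_sum fun m _ => by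
      simpa [neg_div] using ((hasDerivAt_id x).add_const (m : ℝ)).fun_inv (by positivity)
  simpa using hsum.const_sub (log n)

def digammaSeries (x : ℝ) : ℝ :=
  -eulerMascheroniConstant - x⁻¹ + ∑' m : ℕ, x / ((m + 1) * (x + m + 1))

lemma log_sub_sum_inv_add_eq_harmonic {x : ℝ} (hx : 0 ≤ x) (n : ℕ) :
    log n - ∑ m ∈ Finset.range (n + 1), (x + m)⁻¹ =
      (log n - harmonic n) - x⁻¹ + ∑ m ∈ Finset.range n, x / ((m + 1) * (x + m + 1)) := by
  have hterm (m : ℕ) :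
      (x + (m + 1 : ℕ))⁻¹ = ((m : ℝ) + 1)⁻¹ - x / ((m + 1) * (x + m + 1)) := by
    push_cast
    field_simp
    ring
  simp only [Finset.sum_range_succ', hterm, Finset.sum_sub_distrib, harmonic]
  push_cast
  ring

lemma tendstoUniformlyOn_log_sub_sum_inv_add (b : ℝ) :
    TendstoUniformlyOn
      (fun (n : ℕ) (x : ℝ) => log n - ∑ m ∈ Finset.range (n + 1), (x + m)⁻¹)
      digammaSeries atTop (Icc 0 b) := by
  have hconst : Tendsto (fun n : ℕ => log n - harmonic n) atTop
      (𝓝 (-eulerMascheroniConstant)) := by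
    simpa using tendsto_harmonic_sub_log.neg
  have hinv : TendstoUniformlyOn (fun (_ : ℕ) (x : ℝ) => x⁻¹) (·⁻¹) atTop (Icc 0 b) :=
    fun u hu => Eventually.of_forall fun _ _ _ => refl_mem_uniformity hu
  have hseries := tendstoUniformlyOn_tsum_nat
    (f := fun (m : ℕ) (x : ℝ) => x / ((m + 1) * (x + m + 1))) (s := Icc 0 b)
    ((summable_inv_add_nat_sq one_pos).mul_left b) fun m x hx => by
      obtain ⟨hx0, hxb⟩ := hx
      rw [norm_of_nonneg (by positivity), div_eq_mul_inv]
      gcongr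
      · linarith
      · nlinarith
  refine (((hconst.tendstoUniformlyOn_const _).sub hinv).add hseries).congr ?_
  filter_upwards with n x ⟨hx, _⟩
  exact (log_sub_sum_inv_add_eq_harmonic hx n).symm

lemma tendstoUniformlyOn_sum_inv_add_sq {a : ℝ} (ha : 0 < a) :
    TendstoUniformlyOn
      (fun (n : ℕ) (x : ℝ) => ∑ m ∈ Finset.range (n + 1), ((x + m) ^ 2)⁻¹)
      (fun x => ∑' m : ℕ, ((x + m) ^ 2)⁻¹) atTop (Ici a) := by
  have hpartial := tendstoUniformlyOn_tsum_nat
    (f := fun (m : ℕ) (x : ℝ) => ((x + m) ^ 2)⁻¹) (s := Ici a)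
    (summable_inv_add_nat_sq ha) fun m x (hx : a ≤ x) => by
      rw [norm_of_nonneg (by positivity)]
      gcongr
  exact fun u hu => (tendsto_add_atTop_nat 1).eventually (hpartial u hu)

lemma hasDerivAt_log_Gamma {x : ℝ} (hx : 0 < x) :
    HasDerivAt (fun y => log (Gamma y)) (digammaSeries x) x :=
  hasDerivAt_of_tendstoUniformlyOn isOpen_Ioo
    ((tendstoUniformlyOn_log_sub_sum_inv_add (x + 1)).mono Ioo_subset_Icc_self)
    (Eventually.of_forall fun n _ hy => BohrMollerup.hasDerivAt_logGammaSeq n hy.1)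
    (fun _ hy => BohrMollerup.tendsto_log_gamma hy.1) ⟨hx, lt_add_one x⟩

lemma hasDerivAt_digammaSeries {x : ℝ} (hx : 0 < x) :
    HasDerivAt digammaSeries (∑' m : ℕ, ((x + m) ^ 2)⁻¹) x :=
  hasDerivAt_of_tendstoUniformlyOn isOpen_Ioi
    ((tendstoUniformlyOn_sum_inv_add_sq (half_pos hx)).mono Ioi_subset_Ici_self)
    (Eventually.of_forall fun n _ hy => hasDerivAt_log_sub_sum_inv_add n ((half_pos hx).trans hy))
    (fun y hy => (tendstoUniformlyOn_log_sub_sum_inv_add y).tendsto_at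
      ⟨(half_pos hx).le.trans hy.le, le_rfl⟩)
    (half_lt_self hx)

lemma trigamma_eq_tsum {x : ℝ} (hx : 0 < x) : trigamma x = ∑' m : ℕ, ((x + m) ^ 2)⁻¹ := by
  rw [trigamma, iteratedDeriv_succ, iteratedDeriv_one]
  have hψ : deriv (fun y => log (Gamma y)) =ᶠ[𝓝 x] digammaSeries := by
    filter_upwards [eventually_gt_nhds hx] with y hy
    exact (hasDerivAt_log_Gamma hy).deriv
  rw [hψ.deriv_eq, (hasDerivAt_digammaSeries hx).deriv]

lemma integrableOn_mul_exp_neg_mul {c : ℝ} (hc : 0 < c) :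
    IntegrableOn (fun t => t * exp (-t * c)) (Ioi 0) := by
  simpa [mul_comm c] using integrableOn_rpow_mul_exp_neg_mul_rpow (p := 1) (s := 1) (b := c)
    (by norm_num) one_pos hc

lemma integral_mul_exp_neg_mul {c : ℝ} (hc : 0 < c) :
    ∫ t in Ioi 0, t * exp (-t * c) = (c ^ 2)⁻¹ := by
  have := integral_rpow_mul_exp_neg_mul_Ioi two_pos hc
  norm_num [mul_comm c] at this
  simpa [neg_mul, mul_comm c] using this

lemma hasSum_mul_exp_neg_mul_add_nat {t : ℝ} (ht : 0 < t) (z : ℝ) :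
    HasSum (fun m : ℕ => t * exp (-t * (z + m))) (t / (1 - exp (-t)) * exp (-t * z)) := by
  have hgeom := (hasSum_geometric_of_lt_one (exp_nonneg (-t))
    (exp_lt_one_iff.mpr (neg_lt_zero.mpr ht))).mul_left (t * exp (-t * z))
  have hterm (m : ℕ) : t * exp (-t * (z + m)) = t * exp (-t * z) * exp (-t) ^ m := by
    rw [← exp_nat_mul, mul_assoc, ← exp_add]
    ring_nf
  simp_rw [hterm, div_mul_eq_mul_div, div_eq_mul_inv]
  exact hgeom

lemma tsum_inv_add_nat_sq_eq_integral {z : ℝ} (hz : 0 < z) :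
    ∑' m : ℕ, ((z + m) ^ 2)⁻¹ = ∫ t in Ioi 0, t / (1 - exp (-t)) * exp (-t * z) := by
  have hint (m : ℕ) : ∫ t in Ioi 0, t * exp (-t * (z + m)) = ((z + m) ^ 2)⁻¹ :=
    integral_mul_exp_neg_mul (by positivity)
  have hnorm (m : ℕ) : ∫ t in Ioi 0, ‖t * exp (-t * (z + m))‖ = ((z + m) ^ 2)⁻¹ := by
    rw [← hint]
    exact setIntegral_congr_fun measurableSet_Ioi fun t (ht : 0 < t) =>
      norm_of_nonneg (by positivity)
  calc ∑' m : ℕ, ((z + m) ^ 2)⁻¹ = ∑' m : ℕ, ∫ t in Ioi 0, t * exp (-t * (z + m)) := by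
        simp only [hint]
    _ = ∫ t in Ioi 0, ∑' m : ℕ, t * exp (-t * (z + m)) :=
        integral_tsum_of_summable_integral_norm
          (fun m => integrableOn_mul_exp_neg_mul (by positivity))
          (by simpa only [hnorm] using summable_inv_add_nat_sq hz)
    _ = ∫ t in Ioi 0, t / (1 - exp (-t)) * exp (-t * z) :=
        setIntegral_congr_fun measurableSet_Ioi fun t ht =>
          (hasSum_mul_exp_neg_mul_add_nat ht z).tsum_eq

lemma one_le_div_one_sub_exp_neg {t : ℝ} (ht : 0 < t) : 1 ≤ t / (1 - exp (-t)) := by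
  have hpos : 0 < 1 - exp (-t) := sub_pos.mpr (exp_lt_one_iff.mpr (neg_lt_zero.mpr ht))
  rw [one_le_div hpos]
  linarith [add_one_le_exp (-t)]

lemma div_one_sub_exp_neg_le {t : ℝ} (ht : 0 < t) : t / (1 - exp (-t)) ≤ 1 + t := by
  have hpos : 0 < 1 - exp (-t) := sub_pos.mpr (exp_lt_one_iff.mpr (neg_lt_zero.mpr ht))
  rw [div_le_iff₀ hpos]
  have hexp : exp (-t) * exp t = 1 := by rw [← exp_add, neg_add_cancel, exp_zero]
  nlinarith [add_one_le_exp t, exp_pos (-t)]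

lemma exp_sub_one_mul_one_sub_exp_neg_pos {t : ℝ} (ht : t ≠ 0) :
    0 < (exp t - 1) * (1 - exp (-t)) := by
  have hne : exp t - 1 ≠ 0 := sub_ne_zero.mpr (mt (exp_eq_one_iff t).mp ht)
  have hprod : (exp t - 1) * (1 - exp (-t)) = (exp t - 1) ^ 2 * exp (-t) := by
    rw [exp_neg]
    field_simp
  rw [hprod]
  positivity

lemma hasDerivAt_div_one_sub_exp_neg {t : ℝ} (ht : t ≠ 0) :
    HasDerivAt (fun s => s / (1 - exp (-s)))
      ((exp t - 1 - t) / ((exp t - 1) * (1 - exp (-t)))) t := by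
  have hden : 1 - exp (-t) ≠ 0 :=
    sub_ne_zero.mpr (Ne.symm (mt (exp_eq_one_iff (-t)).mp (neg_ne_zero.mpr ht)))
  refine ((hasDerivAt_id' t).fun_div ((hasDerivAt_neg t).exp.const_sub 1) hden).congr_deriv ?_
  rw [exp_neg]
  have : exp t - 1 ≠ 0 := sub_ne_zero.mpr (mt (exp_eq_one_iff t).mp ht)
  field_simp

lemma div_exp_sub_one_mul_one_sub_exp_neg_pos {t : ℝ} (ht : t ≠ 0) :
    0 < (exp t - 1 - t) / ((exp t - 1) * (1 - exp (-t))) :=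
  div_pos (by linarith [add_one_lt_exp ht]) (exp_sub_one_mul_one_sub_exp_neg_pos ht)

lemma div_exp_sub_one_mul_one_sub_exp_neg_le_one {t : ℝ} (ht : t ≠ 0) :
    (exp t - 1 - t) / ((exp t - 1) * (1 - exp (-t))) ≤ 1 := by
  rw [div_le_one (exp_sub_one_mul_one_sub_exp_neg_pos ht)]
  have hexp : exp (-t) * exp t = 1 := by rw [← exp_add, neg_add_cancel, exp_zero]
  nlinarith [add_one_le_exp (-t), exp_pos t]

lemma integrableOn_exp_neg_mul {z : ℝ} (hz : 0 < z) :
    IntegrableOn (fun t => exp (-t * z)) (Ioi 0) := by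
  simpa [mul_comm z] using exp_neg_integrableOn_Ioi 0 hz

lemma integrableOn_div_one_sub_exp_neg_mul_exp {z : ℝ} (hz : 0 < z) :
    IntegrableOn (fun t => t / (1 - exp (-t)) * exp (-t * z)) (Ioi 0) := by
  refine ((integrableOn_exp_neg_mul hz).add (integrableOn_mul_exp_neg_mul hz)).mono'
    (Measurable.aestronglyMeasurable (by fun_prop)) ?_
  filter_upwards [ae_restrict_mem measurableSet_Ioi] with t (ht : 0 < t)
  have := one_le_div_one_sub_exp_neg ht
  rw [norm_of_nonneg (by positivity), Pi.add_apply]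
  nlinarith [div_one_sub_exp_neg_le ht, exp_pos (-t * z)]

lemma integrableOn_exp_sub_one_sub_div_mul_exp {z : ℝ} (hz : 0 < z) :
    IntegrableOn
      (fun t => (exp t - 1 - t) / ((exp t - 1) * (1 - exp (-t))) * exp (-t * z)) (Ioi 0) := by
  refine (integrableOn_exp_neg_mul hz).mono' (Measurable.aestronglyMeasurable (by fun_prop)) ?_
  filter_upwards [ae_restrict_mem measurableSet_Ioi] with t (ht : 0 < t)
  have := div_exp_sub_one_mul_one_sub_exp_neg_pos ht.ne'
  rw [norm_of_nonneg (by positivity)]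
  exact mul_le_of_le_one_left (exp_pos _).le (div_exp_sub_one_mul_one_sub_exp_neg_le_one ht.ne')

lemma tendsto_exp_neg_mul_mul_div_one_sub_exp_neg_nhdsGT_zero (z : ℝ) :
    Tendsto (fun t => exp (-t * z) * (t / (1 - exp (-t)))) (𝓝[>] 0) (𝓝 1) := by
  have hlower : Tendsto (fun t => exp (-t * z)) (𝓝[>] 0) (𝓝 1) := by
    simpa using ((by fun_prop : Continuous fun t => exp (-t * z)).tendsto 0).mono_left
      nhdsWithin_le_nhds
  have hupper : Tendsto (fun t => exp (-t * z) + t * exp (-t * z)) (𝓝[>] 0) (𝓝 1) := by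
    simpa using ((by fun_prop : Continuous fun t => exp (-t * z) + t * exp (-t * z)).tendsto
      0).mono_left nhdsWithin_le_nhds
  refine tendsto_of_tendsto_of_tendsto_of_le_of_le' hlower hupper ?_ ?_ <;>
    filter_upwards [self_mem_nhdsWithin] with t (ht : 0 < t)
  · nlinarith [one_le_div_one_sub_exp_neg ht, exp_pos (-t * z)]
  · nlinarith [div_one_sub_exp_neg_le ht, exp_pos (-t * z)]

lemma tendsto_exp_neg_mul_mul_div_one_sub_exp_neg_atTop {z : ℝ} (hz : 0 < z) :
    Tendsto (fun t => exp (-t * z) * (t / (1 - exp (-t)))) atTop (𝓝 0) := by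
  have hlower : Tendsto (fun t => exp (-t * z)) atTop (𝓝 0) := by
    simpa [mul_comm z] using tendsto_rpow_mul_exp_neg_mul_atTop_nhds_zero 0 z hz
  have hupper : Tendsto (fun t => exp (-t * z) + t * exp (-t * z)) atTop (𝓝 0) := by
    simpa [mul_comm z] using
      hlower.add (tendsto_rpow_mul_exp_neg_mul_atTop_nhds_zero 1 z hz)
  refine tendsto_of_tendsto_of_tendsto_of_le_of_le' hlower hupper ?_ ?_ <;>
    filter_upwards [eventually_gt_atTop 0] with t ht
  · nlinarith [one_le_div_one_sub_exp_neg ht, exp_pos (-t * z)]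
  · nlinarith [div_one_sub_exp_neg_le ht, exp_pos (-t * z)]

lemma integral_exp_sub_one_sub_div_mul_exp_eq {z : ℝ} (hz : 0 < z) :
    ∫ t in Ioi 0, (exp t - 1 - t) / ((exp t - 1) * (1 - exp (-t))) * exp (-t * z) =
      z * (∫ t in Ioi 0, t / (1 - exp (-t)) * exp (-t * z)) - 1 := by
  have hexp (t : ℝ) : HasDerivAt (fun s => exp (-s * z)) (-z * exp (-t * z)) t := by
    simpa [mul_comm] using ((hasDerivAt_id' t).neg.mul_const z).exp
  have hint : IntegrableOn
      (fun t => exp (-t * z) * ((exp t - 1 - t) / ((exp t - 1) * (1 - exp (-t))))) (Ioi 0) := by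
    simpa only [mul_comm (exp _)] using integrableOn_exp_sub_one_sub_div_mul_exp hz
  have hint' : IntegrableOn (fun t => -z * exp (-t * z) * (t / (1 - exp (-t)))) (Ioi 0) :=
    IntegrableOn.congr_fun ((integrableOn_div_one_sub_exp_neg_mul_exp hz).const_mul (-z))
      (fun t _ => by ring) measurableSet_Ioi
  have hparts := integral_Ioi_mul_deriv_eq_deriv_mul (fun t _ => hexp t)
    (fun t (ht : 0 < t) => hasDerivAt_div_one_sub_exp_neg ht.ne') hint hint'
    (tendsto_exp_neg_mul_mul_div_one_sub_exp_neg_nhdsGT_zero z)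
    (tendsto_exp_neg_mul_mul_div_one_sub_exp_neg_atTop hz)
  simp only [mul_assoc, integral_const_mul, mul_comm (exp _)] at hparts
  linarith

lemma integral_exp_sub_one_sub_div_mul_exp_pos {z : ℝ} (hz : 0 < z) :
    0 < ∫ t in Ioi 0, (exp t - 1 - t) / ((exp t - 1) * (1 - exp (-t))) * exp (-t * z) := by
  have hpos : ∀ t ∈ Ioi (0 : ℝ),
      0 < (exp t - 1 - t) / ((exp t - 1) * (1 - exp (-t))) * exp (-t * z) := fun t ht =>
    mul_pos (div_exp_sub_one_mul_one_sub_exp_neg_pos (ne_of_gt ht)) (exp_pos _)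
  rw [setIntegral_pos_iff_support_of_nonneg_ae
    ((ae_restrict_iff' measurableSet_Ioi).mpr (.of_forall fun t ht => (hpos t ht).le))
    (integrableOn_exp_sub_one_sub_div_mul_exp hz)]
  exact lt_of_lt_of_le (by simp)
    (measure_mono fun t (ht : t ∈ Ioi 0) => ⟨(hpos t ht).ne', ht⟩)

end

/-- For all real `z > 0`, `z * ψ'(z) > 1`; equivalently
`z ψ'(z) - 1 = ∫_0^∞ (e^t - 1 - t)/((e^t - 1)(1 - e^{-t})) e^{-t z} dt > 0`. -/
theorem trigamma_mul_self_gt_one (z : ℝ) (hz : 0 < z) :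
    z * trigamma z - 1 =
      (∫ t in Set.Ioi (0 : ℝ),
        (Real.exp t - 1 - t) / ((Real.exp t - 1) * (1 - Real.exp (-t))) * Real.exp (-t * z)) ∧
    1 < z * trigamma z := by
  have hkernel : z * trigamma z - 1 = ∫ t in Ioi 0,
      (exp t - 1 - t) / ((exp t - 1) * (1 - exp (-t))) * exp (-t * z) := by
    rw [trigamma_eq_tsum hz, tsum_inv_add_nat_sq_eq_integral hz,
      integral_exp_sub_one_sub_div_mul_exp_eq hz]
  exact ⟨hkernel, by linarith [integral_exp_sub_one_sub_div_mul_exp_pos hz]⟩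
end

section
/- If p ~ Gamma(a, b) and given p, c ~ Poisson(λp), then E[log p · 1{c ≥ 1}] = (ψ(a) - log b)(1 - (1+λ/b)^{-a}) + log(1+λ/b) · (1+λ/b)^{-a}, where ψ is the digamma function. -/
/-!
On the event `c ≥ 1`, which has conditional probability `1 - e^{-λp}`, the weight
`b^a t^{a-1} e^{-bt} e^{-λt}` is `(1 + λ/b)^{-a}` times the `Gamma(a, b + λ)` density. So the
expectation is a difference of two log-moments of Gamma laws, and `E[log p] = ψ(a) - log β` for
`p ~ Gamma(a, β)`: differentiate Euler's integral `Γ(a) = ∫ t^{a-1} e^{-t} dt` under the integral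
sign (a Mellin transform) and rescale `t ↦ βt`.
-/

open MeasureTheory Real

/-- The digamma function: derivative of `log ∘ Γ`. -/
noncomputable def digamma (z : ℝ) : ℝ :=
  deriv (fun x => Real.log (Real.Gamma x)) z

open Set Filter Asymptotics Topology

lemma mellinConvergent_log_smul_exp_neg_and_hasDerivAt_Gamma {s : ℂ} (hs : 0 < s.re) :
    MellinConvergent (fun t : ℝ => log t • (exp (-t) : ℂ)) s ∧
      HasDerivAt Complex.Gamma (mellin (fun t : ℝ => log t • (exp (-t) : ℂ)) s) s := by
  have hcont : Continuous fun t : ℝ => (exp (-t) : ℂ) := by fun_prop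
  have hf_top : (fun t : ℝ => (exp (-t) : ℂ)) =O[atTop] (· ^ (-(s.re + 1))) := by
    rw [← isBigO_norm_left]
    simp_rw [Complex.norm_real, isBigO_norm_left]
    simpa only [neg_one_mul] using (isLittleO_exp_neg_mul_rpow_atTop zero_lt_one _).isBigO
  have hf_bot : (fun t : ℝ => (exp (-t) : ℂ)) =O[𝓝[>] 0] (· ^ (-(0 : ℝ))) := by
    simp_rw [neg_zero, rpow_zero]
    refine isBigO_const_of_tendsto (?_ : Tendsto _ _ (𝓝 (1 : ℂ))) one_ne_zero
    simpa using (hcont.tendsto 0).mono_left nhdsWithin_le_nhds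
  obtain ⟨hconv, hderiv⟩ := mellin_hasDerivAt_of_isBigO_rpow
    (hcont.continuousOn.locallyIntegrableOn measurableSet_Ioi) hf_top (lt_add_one _) hf_bot hs
  refine ⟨hconv, ?_⟩
  rw [← Complex.GammaIntegral_eq_mellin] at hderiv
  refine hderiv.congr_of_eventuallyEq ?_
  filter_upwards [(isOpen_lt continuous_const Complex.continuous_re).mem_nhds hs] with z hz
  exact Complex.Gamma_eq_integral hz

lemma cpow_smul_log_smul_exp_neg_eq_ofReal {a t : ℝ} (ht : 0 < t) :
    (t : ℂ) ^ ((a : ℂ) - 1) • (log t • (exp (-t) : ℂ)) =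
      ((log t * (exp (-t) * t ^ (a - 1)) : ℝ) : ℂ) := by
  rw [show (a : ℂ) - 1 = ((a - 1 : ℝ) : ℂ) by push_cast; ring, ← Complex.ofReal_cpow ht.le]
  simp only [Complex.real_smul, smul_eq_mul]
  push_cast
  ring

lemma integrableOn_log_mul_exp_neg_mul_rpow {a : ℝ} (ha : 0 < a) :
    IntegrableOn (fun t => log t * (exp (-t) * t ^ (a - 1))) (Ioi 0) := by
  have h := (mellinConvergent_log_smul_exp_neg_and_hasDerivAt_Gamma
    (s := a) (by simpa using ha)).1
  have : IntegrableOn (fun t : ℝ => ((log t * (exp (-t) * t ^ (a - 1)) : ℝ) : ℂ)) (Ioi 0) :=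
    h.congr_fun (fun t ht => cpow_smul_log_smul_exp_neg_eq_ofReal ht) measurableSet_Ioi
  simpa only [RCLike.re_to_complex, Complex.ofReal_re, IntegrableOn] using this.re

lemma hasDerivAt_Gamma_integral_log_mul {a : ℝ} (ha : 0 < a) :
    HasDerivAt Gamma (∫ t in Ioi 0, log t * (exp (-t) * t ^ (a - 1))) a := by
  have h := (mellinConvergent_log_smul_exp_neg_and_hasDerivAt_Gamma
    (s := a) (by simpa using ha)).2.real_of_complex
  rwa [mellin, setIntegral_congr_fun measurableSet_Ioi
    (fun t ht => cpow_smul_log_smul_exp_neg_eq_ofReal ht), integral_complex_ofReal,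
    Complex.ofReal_re] at h

lemma digamma_eq_deriv_Gamma_div_Gamma {a : ℝ} (ha : 0 < a) :
    digamma a = deriv Gamma a / Gamma a := by
  have hdiff : DifferentiableAt ℝ Gamma a := differentiableOn_Gamma_Ioi.differentiableAt
    (Ioi_mem_nhds ha)
  exact (hdiff.hasDerivAt.log (Gamma_pos_of_pos ha).ne').deriv

/-- The substitution `u = β t`, in the shape needed by `integral_comp_mul_left_Ioi`. -/
lemma log_mul_rpow_mul_exp_neg_mul_eq {a β t : ℝ} (hβ : 0 < β) (ht : 0 < t) :
    log t * (t ^ (a - 1) * exp (-(β * t))) =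
      β ^ (1 - a) * (log (β * t) * (exp (-(β * t)) * (β * t) ^ (a - 1)) -
        log β * (exp (-(β * t)) * (β * t) ^ (a - 1))) := by
  have hpow : β ^ (1 - a) * β ^ (a - 1) = 1 := by
    rw [← rpow_add hβ, sub_add_sub_cancel', sub_self, rpow_zero]
  rw [log_mul hβ.ne' ht.ne', mul_rpow hβ.le ht.le]
  linear_combination (-(log t * (t ^ (a - 1) * exp (-(β * t))))) * hpow

lemma integrableOn_log_mul_rpow_mul_exp_neg_mul {a β : ℝ} (ha : 0 < a) (hβ : 0 < β) :
    IntegrableOn (fun t => log t * (t ^ (a - 1) * exp (-(β * t)))) (Ioi 0) := by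
  have hG : IntegrableOn (fun u => log u * (exp (-u) * u ^ (a - 1)) -
      log β * (exp (-u) * u ^ (a - 1))) (Ioi (β * 0)) := by
    rw [mul_zero]
    exact (integrableOn_log_mul_exp_neg_mul_rpow ha).sub
      ((GammaIntegral_convergent ha).const_mul (log β))
  rw [← integrableOn_Ioi_comp_mul_left_iff _ _ hβ] at hG
  exact IntegrableOn.congr_fun (hG.const_mul (β ^ (1 - a)))
    (fun t ht => (log_mul_rpow_mul_exp_neg_mul_eq hβ ht).symm) measurableSet_Ioi

lemma integral_log_mul_rpow_mul_exp_neg_mul {a β : ℝ} (ha : 0 < a) (hβ : 0 < β) :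
    ∫ t in Ioi 0, log t * (t ^ (a - 1) * exp (-(β * t))) =
      (deriv Gamma a - Gamma a * log β) / β ^ a := by
  have hscale : β ^ (1 - a) * β⁻¹ = (β ^ a)⁻¹ := by
    rw [← rpow_neg_one, ← rpow_add hβ, ← rpow_neg hβ.le]
    ring_nf
  rw [setIntegral_congr_fun measurableSet_Ioi (fun t ht => log_mul_rpow_mul_exp_neg_mul_eq hβ ht),
    integral_const_mul, integral_comp_mul_left_Ioi (fun u =>
      log u * (exp (-u) * u ^ (a - 1)) - log β * (exp (-u) * u ^ (a - 1))) 0 hβ, mul_zero,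
    integral_sub (integrableOn_log_mul_exp_neg_mul_rpow ha)
      ((GammaIntegral_convergent ha).const_mul _),
    integral_const_mul, ← Gamma_eq_integral ha, ← (hasDerivAt_Gamma_integral_log_mul ha).deriv,
    smul_eq_mul, ← mul_assoc, hscale, div_eq_inv_mul, mul_comm (Gamma a)]

lemma integrableOn_log_mul_gamma_density {a β : ℝ} (ha : 0 < a) (hβ : 0 < β) :
    IntegrableOn (fun t => log t * (β ^ a * t ^ (a - 1) * exp (-(β * t)) / Gamma a)) (Ioi 0) :=
  IntegrableOn.congr_fun
    ((integrableOn_log_mul_rpow_mul_exp_neg_mul ha hβ).const_mul (β ^ a / Gamma a))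
    (fun t _ => by ring) measurableSet_Ioi

lemma integral_log_mul_gamma_density {a β : ℝ} (ha : 0 < a) (hβ : 0 < β) :
    ∫ t in Ioi 0, log t * (β ^ a * t ^ (a - 1) * exp (-(β * t)) / Gamma a) =
      digamma a - log β := by
  have hΓ := (Gamma_pos_of_pos ha).ne'
  have hβa := (rpow_pos_of_pos hβ a).ne'
  calc ∫ t in Ioi 0, log t * (β ^ a * t ^ (a - 1) * exp (-(β * t)) / Gamma a)
      = β ^ a / Gamma a * ∫ t in Ioi 0, log t * (t ^ (a - 1) * exp (-(β * t))) := by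
        rw [← integral_const_mul]
        congr 1 with t
        ring
    _ = digamma a - log β := by
        rw [integral_log_mul_rpow_mul_exp_neg_mul ha hβ, digamma_eq_deriv_Gamma_div_Gamma ha]
        field_simp

/-- If `p ~ Gamma(a, b)` and given `p`, `c ~ Poisson(λ p)`, then
`E[log p · 1{c ≥ 1}] = (ψ(a) - log b)(1 - (1+λ/b)^(-a)) + log(1+λ/b) (1+λ/b)^(-a)`,
where `ψ` is the digamma function. -/
theorem gamma_poisson_log_mass (a b lam : ℝ)
    (ha : 0 < a) (hb : 0 < b) (hlam : 0 < lam) :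
    (∫ t in Set.Ioi (0 : ℝ),
        Real.log t * (1 - Real.exp (-(lam * t))) *
          (b ^ a * t ^ (a - 1) * Real.exp (-(b * t)) / Real.Gamma a)) =
      (digamma a - Real.log b) * (1 - (1 + lam / b) ^ (-a)) +
        Real.log (1 + lam / b) * (1 + lam / b) ^ (-a) := by
  have hbl : 0 < b + lam := by linarith
  have hsum : 1 + lam / b = (b + lam) / b := by field_simp
  set r := (1 + lam / b) ^ (-a) with hr
  have hratio : b ^ a = r * (b + lam) ^ a := by
    rw [hr, hsum, rpow_neg (div_pos hbl hb).le, div_rpow hbl.le hb.le, inv_div,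
      div_mul_cancel₀ _ (rpow_pos_of_pos hbl a).ne']
  have hlog : log (b + lam) = log b + log (1 + lam / b) := by
    rw [hsum, log_div hbl.ne' hb.ne', add_sub_cancel]
  have hsplit : ∀ t, log t * (1 - exp (-(lam * t))) *
        (b ^ a * t ^ (a - 1) * exp (-(b * t)) / Gamma a) =
      log t * (b ^ a * t ^ (a - 1) * exp (-(b * t)) / Gamma a) -
        r * (log t * ((b + lam) ^ a * t ^ (a - 1) * exp (-((b + lam) * t)) / Gamma a)) := by
    intro t
    rw [hratio, add_mul, neg_add, exp_add]
    ring
  simp_rw [hsplit]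
  rw [integral_sub (integrableOn_log_mul_gamma_density ha hb)
      ((integrableOn_log_mul_gamma_density ha hbl).const_mul r),
    integral_const_mul, integral_log_mul_gamma_density ha hb,
    integral_log_mul_gamma_density ha hbl, hlog]
  ring
end
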